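/- Let a < 1/2, a_n = Γ(a+1)Γ(n)/Γ(n+a), and b_n = ∑_{k=1}^n 1/a_k with b_0 = 0. Then lim_{n→∞} (b_n/n^3) ∑_{k=1}^n a_k^2 b_{k-1} = 1/((2-a)(a+1)^2). -/

import Mathlib

open Filter

/-- `a_n = Γ(a+1)Γ(n)/Γ(n+a)`. -/
noncomputable def aseq (a : ℝ) (n : ℕ) : ℝ :=
  Real.Gamma (a + 1) * Real.Gamma n / Real.Gamma ((n : ℝ) + a)

/-- `b_n = ∑_{k=1}^n 1/a_k`, with `b_0 = 0`. -/
noncomputable def bseq (a : ℝ) (n : ℕ) : ℝ := ∑ k ∈ Finset.Icc 1 n, (aseq a k)⁻¹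

/-!
Everything follows from the recurrence `a_{n+1} = a_n n / (n + a)`, `a_1 = 1`. It gives the
closed form `b_n = (n + a) / ((a + 1) a_n)`, hence `a_k² b_{k-1} = (k - 1) a_k / (a + 1)`, and the
sum `∑_{k ≤ n} (k - 1) a_k` telescopes to an expression in `n` and `a_n`. After these
substitutions the only non-polynomial term in the limit is `1 / (n² a_n)`, which tends to `0`
because `1 / a_n = ∏_{k<n} (k + a) / k ≤ n` when `a ≤ 1`.
-/

section Sequences

variable {a : ℝ} {n : ℕ}

theorem aseq_zero (a : ℝ) : aseq a 0 = 0 := by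
  simp [aseq, Real.Gamma_zero]

theorem aseq_one (ha : -1 < a) : aseq a 1 = 1 := by
  have : Real.Gamma (a + 1) ≠ 0 := (Real.Gamma_pos_of_pos (by linarith)).ne'
  simp [aseq, add_comm, this]

theorem aseq_pos (ha : -1 < a) (hn : n ≠ 0) : 0 < aseq a n := by
  have hn1 : (1 : ℝ) ≤ n := by exact_mod_cast Nat.one_le_iff_ne_zero.mpr hn
  unfold aseq
  have := Real.Gamma_pos_of_pos (show 0 < a + 1 by linarith)
  have := Real.Gamma_pos_of_pos (show (0 : ℝ) < n by linarith)
  have := Real.Gamma_pos_of_pos (show 0 < (n : ℝ) + a by linarith)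
  positivity

theorem aseq_succ (hn : n ≠ 0) (hna : (n : ℝ) + a ≠ 0) :
    aseq a (n + 1) = aseq a n * n / (n + a) := by
  have hGna : Real.Gamma ((n : ℝ) + 1 + a) = (n + a) * Real.Gamma (n + a) := by
    rw [add_right_comm, Real.Gamma_add_one hna]
  simp only [aseq, Nat.cast_add_one, Real.Gamma_add_one (Nat.cast_ne_zero.mpr hn), hGna]
  field_simp

theorem bseq_succ (a : ℝ) (n : ℕ) : bseq a (n + 1) = bseq a n + (aseq a (n + 1))⁻¹ :=
  Finset.sum_Icc_succ_top (by omega) _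

theorem bseq_eq (ha : -1 < a) (n : ℕ) : bseq a n = (n + a) / ((a + 1) * aseq a n) := by
  have ha1 : a + 1 ≠ 0 := by linarith
  induction n with
  | zero => simp [bseq, aseq_zero]
  | succ n ih =>
    rw [bseq_succ, ih]
    rcases Nat.eq_zero_or_pos n with rfl | hn
    · simp [aseq_zero, aseq_one ha, add_comm, ha1]
    · have hn1 : (1 : ℝ) ≤ n := by exact_mod_cast hn
      have hna : (n : ℝ) + a ≠ 0 := by linarith
      have := (aseq_pos ha hn.ne').ne'
      rw [aseq_succ hn.ne' hna]
      push_cast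
      field_simp
      ring

theorem aseq_sq_mul_bseq_pred (ha : -1 < a) (hn : n ≠ 0) :
    aseq a n ^ 2 * bseq a (n - 1) = ((n : ℝ) - 1) * aseq a n / (a + 1) := by
  obtain ⟨m, rfl⟩ := Nat.exists_eq_add_one_of_ne_zero hn
  rw [Nat.add_sub_cancel, bseq_eq ha]
  push_cast
  rcases Nat.eq_zero_or_pos m with rfl | hm
  · simp [aseq_zero]
  · have hm1 : (1 : ℝ) ≤ m := by exact_mod_cast hm
    have hma : (m : ℝ) + a ≠ 0 := by linarith
    have := (aseq_pos ha hm.ne').ne'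
    have : a + 1 ≠ 0 := by linarith
    rw [aseq_succ hm.ne' hma]
    field_simp
    ring

theorem sum_Icc_sub_one_mul_aseq (ha : -1 < a) (ha1 : a ≠ 1) (ha2 : a ≠ 2) (hn : 1 ≤ n) :
    ∑ k ∈ Finset.Icc 1 n, ((k : ℝ) - 1) * aseq a k
      = (n * (n + 1) * aseq a n - a) / (2 - a) - (n * aseq a n - a) / (1 - a) := by
  have h1a : 1 - a ≠ 0 := sub_ne_zero.mpr (Ne.symm ha1)
  have h2a : 2 - a ≠ 0 := sub_ne_zero.mpr (Ne.symm ha2)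
  induction n, hn using Nat.le_induction with
  | base =>
    simp only [Finset.Icc_self, Finset.sum_singleton, aseq_one ha]
    field_simp
    ring
  | succ n hn ih =>
    have hn1 : (1 : ℝ) ≤ n := by exact_mod_cast hn
    have hna : (n : ℝ) + a ≠ 0 := by linarith
    rw [Finset.sum_Icc_succ_top (by omega), ih, aseq_succ (by omega) hna]
    push_cast
    field_simp
    ring

theorem inv_aseq_le (ha : -1 < a) (ha1 : a ≤ 1) (hn : n ≠ 0) : (aseq a n)⁻¹ ≤ n := by
  replace hn := Nat.one_le_iff_ne_zero.mpr hn
  induction n, hn using Nat.le_induction with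
  | base => simp [aseq_one ha]
  | succ n hn ih =>
    have hn1 : (1 : ℝ) ≤ n := by exact_mod_cast hn
    have hpos := aseq_pos ha (n := n) (by omega)
    rw [aseq_succ (by omega) (by linarith)]
    push_cast
    calc (aseq a n * n / (n + a))⁻¹ = (n + a) / n * (aseq a n)⁻¹ := by
          field_simp
      _ ≤ (n + a) / n * n := mul_le_mul_of_nonneg_left ih (div_nonneg (by linarith) (by linarith))
      _ ≤ n + 1 := by field_simp; linarith

theorem tendsto_inv_aseq_div_sq (ha : -1 < a) (ha1 : a ≤ 1) :
    Tendsto (fun n : ℕ => (aseq a n)⁻¹ / (n : ℝ) ^ 2) atTop (nhds 0) := by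
  refine squeeze_zero' ?_ ?_ tendsto_inv_atTop_nhds_zero_nat
  · filter_upwards [eventually_ne_atTop 0] with n hn
    have := aseq_pos ha hn
    positivity
  · filter_upwards [eventually_ne_atTop 0] with n hn
    have hn0 : (0 : ℝ) < n := by positivity
    calc (aseq a n)⁻¹ / (n : ℝ) ^ 2 ≤ n / (n : ℝ) ^ 2 := by gcongr; exact inv_aseq_le ha ha1 hn
      _ = (n : ℝ)⁻¹ := by field_simp

end Sequences

/-- For `-1 < a < 1/2`, `(b_n / n³) ∑_{k=1}^n a_k² b_{k-1} → 1/((2-a)(a+1)²)`. -/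
theorem stmt_5 (a : ℝ) (ha : -1 < a) (ha2 : a < 1 / 2) :
    Tendsto (fun n : ℕ =>
        bseq a n / (n : ℝ) ^ 3 * ∑ k ∈ Finset.Icc 1 n, (aseq a k) ^ 2 * bseq a (k - 1))
      atTop (nhds (1 / ((2 - a) * (a + 1) ^ 2))) := by
  have ha1 : a + 1 ≠ 0 := by linarith
  have h1a : 1 - a ≠ 0 := by linarith
  have h2a : 2 - a ≠ 0 := by linarith
  -- the expression in terms of `x = 1/n` and `y = 1/(n² a_n)`
  let F : ℝ × ℝ → ℝ := fun p => ((1 + a * p.1) * (1 + p.1) / (2 - a) - (1 + a * p.1) * p.1 / (1 - a)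
    - a * (1 + a * p.1) * p.2 * (1 / (2 - a) - 1 / (1 - a))) / (a + 1) ^ 2
  have hF : Tendsto F (nhds (0, 0)) (nhds (1 / ((2 - a) * (a + 1) ^ 2))) := by
    convert (show Continuous F by fun_prop).tendsto (0, 0) using 2
    simp only [F, mul_zero, add_zero, mul_one, zero_div, sub_zero, zero_mul]
    field_simp
  refine (hF.comp (tendsto_inv_atTop_nhds_zero_nat.prodMk_nhds
    (tendsto_inv_aseq_div_sq ha (by linarith)))).congr' ?_
  filter_upwards [eventually_ne_atTop 0] with n hn
  have hn1 : 1 ≤ n := Nat.one_le_iff_ne_zero.mpr hn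
  have han : aseq a n ≠ 0 := (aseq_pos ha hn).ne'
  have hn0 : (n : ℝ) ≠ 0 := by exact_mod_cast hn
  rw [Function.comp_apply, Finset.sum_congr rfl fun k (hk : k ∈ Finset.Icc 1 n) =>
      aseq_sq_mul_bseq_pred ha (Nat.one_le_iff_ne_zero.mp (Finset.mem_Icc.mp hk).1), ← Finset.sum_div,
    sum_Icc_sub_one_mul_aseq ha (by linarith) (by linarith) hn1, bseq_eq ha]
  simp only [F]
  field_simp
  ring
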